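/- arXiv:2603.27614 — 5 statements merged into one kernel-verified Lean document; each statement's English description precedes it below -/
import Mathlib

section
/- In the category of symmetric reflexive graphs with bijective relation-preserving maps and the involution given by complement-with-diagonal on objects and inverse on maps, the only pre-unitary objects are the empty graph and the one-point graph. That is, if (X, ∼) carries an isomorphism h : X → X† with h ⋅ (h^{-1})† = ι (which here forces h ∘ h = id as a set map), then |X| ≤ 1. -/
universe u

/-! An isomorphism `h : (X, r) ≅ (X, r†)` makes distinct points adjacent exactly when their images
are not. Applied to the pair `x, h x` of an involution, symmetry of `r` turns this into
`r x (h x) ↔ ¬ r x (h x)`, so `h` fixes every point; then every pair of distinct points would be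
adjacent and non-adjacent at once. -/

theorem rel_iff_not_rel_of_iso_dagger {X Y : Type*} {r : X → X → Prop} {s : Y → Y → Prop}
    (h : X ≃ Y) (hpres : ∀ x y, r x y → (h x = h y ∨ ¬ s (h x) (h y)))
    (hinvpres : ∀ u v, (u = v ∨ ¬ s u v) → r (h.symm u) (h.symm v))
    {x y : X} (hxy : x ≠ y) : r x y ↔ ¬ s (h x) (h y) :=
  ⟨fun hr => (hpres x y hr).resolve_left (h.injective.ne hxy),
    fun hs => by simpa using hinvpres (h x) (h y) (Or.inr hs)⟩

theorem Function.Involutive.eq_self_of_rel_iff_not_rel {X : Type*} {r : X → X → Prop}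
    (hsymm : ∀ x y, r x y → r y x) {h : X → X} (hh : Function.Involutive h)
    (hr : ∀ x y, x ≠ y → (r x y ↔ ¬ r (h x) (h y))) (x : X) : h x = x := by
  by_contra hne
  have hx : r x (h x) ↔ ¬ r (h x) x := by simpa only [hh x] using hr x (h x) (Ne.symm hne)
  exact iff_not_self (hx.trans (not_congr ⟨hsymm _ _, hsymm _ _⟩))

theorem srgraph_preunitary_subsingleton_general {X : Type u}
    (r : X → X → Prop) (hsymm : ∀ x y, r x y → r y x)
    (h : X ≃ X)
    (hpres : ∀ x y, r x y → (h x = h y ∨ ¬ r (h x) (h y)))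
    (hinvpres : ∀ x y, (x = y ∨ ¬ r x y) → r (h.symm x) (h.symm y))
    (hh : ∀ x, h (h x) = x) :
    Subsingleton X := by
  have hdagger : ∀ x y, x ≠ y → (r x y ↔ ¬ r (h x) (h y)) :=
    fun _ _ => rel_iff_not_rel_of_iso_dagger h hpres hinvpres
  have hfix : ∀ x, h x = x :=
    Function.Involutive.eq_self_of_rel_iff_not_rel hsymm hh hdagger
  refine ⟨fun x y => by_contra fun hxy => ?_⟩
  exact iff_not_self (by simpa only [hfix] using hdagger x y hxy)

/-- In the category `SRGraph` of symmetric reflexive graphs with bijective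
relation-preserving maps, with involution `(X,∼) ↦ (X,∼†)` where `x ∼† x' ↔ (x = x' ∨ ¬ x ∼ x')`
and `α ↦ α⁻¹` on maps, the only pre-unitary objects have at most one point.
Here `h : (X,∼) → (X,∼†)` is an isomorphism (so both `h` and its inverse preserve the
respective relations), and the pre-unitary condition `h ≫ (h⁻¹)† = ι = id` amounts to
`h ∘ h = id` on the underlying set. -/
theorem srgraph_preunitary_subsingleton {X : Type u}
    (r : X → X → Prop) (hrefl : ∀ x, r x x) (hsymm : ∀ x y, r x y → r y x)
    (h : X ≃ X)
    (hpres : ∀ x y, r x y → (h x = h y ∨ ¬ r (h x) (h y)))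
    (hinvpres : ∀ x y, (x = y ∨ ¬ r x y) → r (h.symm x) (h.symm y))
    (hh : ∀ x, h (h x) = x) :
    Subsingleton X :=
  srgraph_preunitary_subsingleton_general r hsymm h hpres hinvpres hh
end

section
/- Every unitary category is an inner product category: defining ⟨f|g⟩ := f ⋅ φ_X ⋅ g† for f : A → X and g : B → X (so ⟨f|g⟩ : A → B†), the axioms [IP.1]–[IP.4] hold, and the dual inner product computes as ⟨h|k⟩^ι = h† ⋅ φ_X^{-1} ⋅ k for h : X → A, k : X → B. -/
open CategoryTheory

universe v u

/-- An (achiral) involutive category: a contravariant endofunctor `(−)†`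
together with a natural isomorphism `ι : X → X††` satisfying `ι_{X†} ≫ (ι_X)† = 1`. -/
structure Involutive (C : Type u) [Category.{v} C] where
  dob : C → C
  dmap : ∀ {X Y : C}, (X ⟶ Y) → (dob Y ⟶ dob X)
  dmap_id : ∀ X : C, dmap (𝟙 X) = 𝟙 (dob X)
  dmap_comp : ∀ {X Y Z : C} (f : X ⟶ Y) (g : Y ⟶ Z), dmap (f ≫ g) = dmap g ≫ dmap f
  ι : ∀ X : C, X ⟶ dob (dob X)
  ιinv : ∀ X : C, dob (dob X) ⟶ X
  ι_hom_inv : ∀ X : C, ι X ≫ ιinv X = 𝟙 X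
  ι_inv_hom : ∀ X : C, ιinv X ≫ ι X = 𝟙 (dob (dob X))
  ι_natural : ∀ {X Y : C} (f : X ⟶ Y), f ≫ ι Y = ι X ≫ dmap (dmap f)
  ι_dagger : ∀ X : C, ι (dob X) ≫ dmap (ι X) = 𝟙 (dob X)

/-- A unitary structure on an involutive category: isomorphisms `φ_X : X → X†`
with `φ_{X†} = (φ_X⁻¹)†` and `φ_X ≫ φ_{X†} = ι_X`. -/
structure UnitaryStruct {C : Type u} [Category.{v} C] (D : Involutive C) where
  φ : ∀ X : C, X ⟶ D.dob X
  φinv : ∀ X : C, D.dob X ⟶ X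
  φ_hom_inv : ∀ X : C, φ X ≫ φinv X = 𝟙 X
  φ_inv_hom : ∀ X : C, φinv X ≫ φ X = 𝟙 (D.dob X)
  u1 : ∀ X : C, φ (D.dob X) = D.dmap (φinv X)
  u2 : ∀ X : C, φ X ≫ φ (D.dob X) = D.ι X

/-- An inner product combinator on an involutive category. -/
structure IPStruct {C : Type u} [Category.{v} C] (D : Involutive C) where
  ip : ∀ {A B X : C}, (A ⟶ X) → (B ⟶ X) → (A ⟶ D.dob B)

/-- The dual inner product `⟨h|k⟩^ι := ι_{A†} ≫ ⟨k†|h†⟩† ≫ ι_B⁻¹`. -/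
def IPStruct.dual {C : Type u} [Category.{v} C] {D : Involutive C} (S : IPStruct D)
    {X A B : C} (h : X ⟶ A) (k : X ⟶ B) : D.dob A ⟶ B :=
  D.ι (D.dob A) ≫ D.dmap (S.ip (D.dmap k) (D.dmap h)) ≫ D.ιinv B

/-- An inner product category: axioms [IP.1]–[IP.4]. -/
structure InnerProduct {C : Type u} [Category.{v} C] (D : Involutive C) extends IPStruct D where
  ip1 : ∀ {A B X Y Z : C} (f : A ⟶ X) (g : B ⟶ X) (h : Y ⟶ A) (k : Z ⟶ B),
    ip (h ≫ f) (k ≫ g) = h ≫ ip f g ≫ D.dmap k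
  ip2a : ∀ {A B X : C} (f : A ⟶ X) (g : B ⟶ X),
    D.ι A ≫ toIPStruct.dual (D.dmap f) (D.dmap g) = ip f g
  ip2b : ∀ {A B X : C} (f : A ⟶ X) (g : B ⟶ X),
    D.ι B ≫ D.dmap (ip f g) = ip g f
  ip3 : ∀ {A B X : C} (f : A ⟶ X) (g : B ⟶ X) (h k : X ⟶ B),
    h ≫ g = 𝟙 X → ip f g ≫ toIPStruct.dual h k = f ≫ k
  ip4 : ∀ {A X Z : C} (f : A ⟶ Z) (g : A ⟶ X) (h k : X ⟶ A),
    g ≫ h = 𝟙 A → toIPStruct.dual f g ≫ ip h k = D.dmap (k ≫ f)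

/-- The inner product induced by a unitary structure: `⟨f|g⟩ := f ≫ φ_X ≫ g†`. -/
def UnitaryStruct.uip {C : Type u} [Category.{v} C] {D : Involutive C} (U : UnitaryStruct D)
    {A B X : C} (f : A ⟶ X) (g : B ⟶ X) : A ⟶ D.dob B :=
  f ≫ U.φ X ≫ D.dmap g

/-- The dual inner product induced by a unitary structure. -/
def UnitaryStruct.udual {C : Type u} [Category.{v} C] {D : Involutive C} (U : UnitaryStruct D)
    {X A B : C} (h : X ⟶ A) (k : X ⟶ B) : D.dob A ⟶ B :=
  D.ι (D.dob A) ≫ D.dmap (U.uip (D.dmap k) (D.dmap h)) ≫ D.ιinv B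

/-- The inner adjoint `f* := φ_B ≫ f† ≫ φ_A⁻¹` of `f : A ⟶ B`. -/
def UnitaryStruct.adj {C : Type u} [Category.{v} C] {D : Involutive C} (U : UnitaryStruct D)
    {A B : C} (f : A ⟶ B) : B ⟶ A :=
  U.φ B ≫ D.dmap f ≫ U.φinv A

/-!
After unfolding, every axiom follows from naturality of `ι` together with the two identities
`ι_X ≫ (φ_X)† = φ_X` and `ι_X ≫ φ_{X†}⁻¹ = φ_X`, both read off from `φ_X ≫ φ_{X†} = ι_X` and
`φ_{X†} = (φ_X⁻¹)†`; the dual inner product `ι_{A†} ≫ ⟨k†|h†⟩† ≫ ι_B⁻¹` collapses to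
`h† ≫ φ_X⁻¹ ≫ k` in the same way.
-/

namespace Involutive

variable {C : Type u} [Category.{v} C] (D : Involutive C)

theorem ι_comp_dmap_dmap {X Y : C} (f : X ⟶ Y) : D.ι X ≫ D.dmap (D.dmap f) = f ≫ D.ι Y :=
  (D.ι_natural f).symm

theorem dmap_comp_dmap_of_comp_eq_id {X Y : C} {f : X ⟶ Y} {g : Y ⟶ X} (hfg : f ≫ g = 𝟙 X) :
    D.dmap g ≫ D.dmap f = 𝟙 (D.dob X) := by
  rw [← D.dmap_comp, hfg, D.dmap_id]

end Involutive

namespace UnitaryStruct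

variable {C : Type u} [Category.{v} C] {D : Involutive C} (U : UnitaryStruct D)

theorem ι_comp_φinv_dob (X : C) : D.ι X ≫ U.φinv (D.dob X) = U.φ X := by
  rw [← U.u2, Category.assoc, U.φ_hom_inv, Category.comp_id]

theorem ι_comp_dmap_φ (X : C) : D.ι X ≫ D.dmap (U.φ X) = U.φ X := by
  rw [← U.u2, U.u1, Category.assoc, D.dmap_comp_dmap_of_comp_eq_id (U.φ_hom_inv X),
    Category.comp_id]

theorem ι_dob_comp_dmap_φ_dob (X : C) :
    D.ι (D.dob X) ≫ D.dmap (U.φ (D.dob X)) = U.φinv X ≫ D.ι X := by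
  rw [U.u1, D.ι_comp_dmap_dmap]

theorem udual_eq {X A B : C} (h : X ⟶ A) (k : X ⟶ B) :
    U.udual h k = D.dmap h ≫ U.φinv X ≫ k := by
  simp only [udual, uip, D.dmap_comp, Category.assoc]
  rw [reassoc_of% D.ι_comp_dmap_dmap (D.dmap h), reassoc_of% U.ι_dob_comp_dmap_φ_dob X,
    reassoc_of% D.ι_comp_dmap_dmap k, D.ι_hom_inv, Category.comp_id]

theorem uip_comp_comp {A B X Y Z : C} (f : A ⟶ X) (g : B ⟶ X) (h : Y ⟶ A) (k : Z ⟶ B) :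
    U.uip (h ≫ f) (k ≫ g) = h ≫ U.uip f g ≫ D.dmap k := by
  simp only [uip, D.dmap_comp, Category.assoc]

theorem ι_comp_udual_dmap_dmap {A B X : C} (f : A ⟶ X) (g : B ⟶ X) :
    D.ι A ≫ U.udual (D.dmap f) (D.dmap g) = U.uip f g := by
  rw [udual_eq, reassoc_of% D.ι_comp_dmap_dmap f, reassoc_of% U.ι_comp_φinv_dob X, uip]

theorem ι_comp_dmap_uip {A B X : C} (f : A ⟶ X) (g : B ⟶ X) :
    D.ι B ≫ D.dmap (U.uip f g) = U.uip g f := by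
  simp only [uip, D.dmap_comp, Category.assoc]
  rw [reassoc_of% D.ι_comp_dmap_dmap g, reassoc_of% U.ι_comp_dmap_φ X]

theorem uip_comp_udual {A B X : C} (f : A ⟶ X) (g : B ⟶ X) (h k : X ⟶ B) (hg : h ≫ g = 𝟙 X) :
    U.uip f g ≫ U.udual h k = f ≫ k := by
  rw [udual_eq, uip, Category.assoc, Category.assoc,
    reassoc_of% D.dmap_comp_dmap_of_comp_eq_id hg, reassoc_of% U.φ_hom_inv X]

theorem udual_comp_uip {A X Z : C} (f : A ⟶ Z) (g : A ⟶ X) (h k : X ⟶ A) (hg : g ≫ h = 𝟙 A) :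
    U.udual f g ≫ U.uip h k = D.dmap (k ≫ f) := by
  rw [udual_eq, uip, Category.assoc, Category.assoc, reassoc_of% hg,
    reassoc_of% U.φ_inv_hom A, ← D.dmap_comp]

end UnitaryStruct

/-- Every unitary category is an inner product category: with `⟨f|g⟩ := f ≫ φ_X ≫ g†`,
the dual inner product computes as `⟨h|k⟩^ι = h† ≫ φ_X⁻¹ ≫ k`, and [IP.1]–[IP.4] hold. -/
theorem unitary_is_inner_product {C : Type u} [Category.{v} C]
    (D : Involutive C) (U : UnitaryStruct D) :
    (∀ {X A B : C} (h : X ⟶ A) (k : X ⟶ B),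
      U.udual h k = D.dmap h ≫ U.φinv X ≫ k) ∧
    (∀ {A B X Y Z : C} (f : A ⟶ X) (g : B ⟶ X) (h : Y ⟶ A) (k : Z ⟶ B),
      U.uip (h ≫ f) (k ≫ g) = h ≫ U.uip f g ≫ D.dmap k) ∧
    (∀ {A B X : C} (f : A ⟶ X) (g : B ⟶ X),
      D.ι A ≫ U.udual (D.dmap f) (D.dmap g) = U.uip f g) ∧
    (∀ {A B X : C} (f : A ⟶ X) (g : B ⟶ X),
      D.ι B ≫ D.dmap (U.uip f g) = U.uip g f) ∧
    (∀ {A B X : C} (f : A ⟶ X) (g : B ⟶ X) (h k : X ⟶ B),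
      h ≫ g = 𝟙 X → U.uip f g ≫ U.udual h k = f ≫ k) ∧
    (∀ {A X Z : C} (f : A ⟶ Z) (g : A ⟶ X) (h k : X ⟶ A),
      g ≫ h = 𝟙 A → U.udual f g ≫ U.uip h k = D.dmap (k ≫ f)) :=
  ⟨U.udual_eq, U.uip_comp_comp, U.ι_comp_udual_dmap_dmap, U.ι_comp_dmap_uip,
    U.uip_comp_udual, U.udual_comp_uip⟩
end

section
/- Every inner product category is a unitary category, where the unitary structure map is φ_A := ⟨1_A|1_A⟩ : A → A†. In particular, φ_A is an isomorphism with inverse ⟨1_A|1_A⟩^ι, and satisfies [U.1] φ_{A†} = (φ_A^{-1})† and [U.2] φ_A ⋅ φ_{A†} = ι_A. -/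
open CategoryTheory

universe v u

namespace Involutive

variable {C : Type u} [Category.{v} C] (D : Involutive C)

theorem dmap_ιinv (X : C) : D.dmap (D.ιinv X) = D.ι (D.dob X) := by
  calc D.dmap (D.ιinv X)
      = (D.ι (D.dob X) ≫ D.dmap (D.ι X)) ≫ D.dmap (D.ιinv X) := by
        rw [D.ι_dagger, Category.id_comp]
    _ = D.ι (D.dob X) ≫ D.dmap (D.ιinv X ≫ D.ι X) := by
        rw [D.dmap_comp, Category.assoc]
    _ = D.ι (D.dob X) := by rw [D.ι_inv_hom, D.dmap_id, Category.comp_id]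

theorem dmap_ι_comp_dmap_comp_ιinv {A B : C} (f : D.dob B ⟶ D.dob (D.dob A)) :
    D.dmap (D.ι (D.dob A) ≫ D.dmap f ≫ D.ιinv B) = f := by
  rw [D.dmap_comp, D.dmap_comp, dmap_ιinv, ← D.ι_natural,
    Category.assoc, D.ι_dagger, Category.comp_id]

end Involutive

theorem IPStruct.dmap_dual {C : Type u} [Category.{v} C] {D : Involutive C} (S : IPStruct D)
    {X A B : C} (h : X ⟶ A) (k : X ⟶ B) :
    D.dmap (S.dual h k) = S.ip (D.dmap k) (D.dmap h) :=
  D.dmap_ι_comp_dmap_comp_ιinv _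

namespace InnerProduct

variable {C : Type u} [Category.{v} C] {D : Involutive C} (S : InnerProduct D)

theorem ip_id_comp_dual_id (A : C) : S.ip (𝟙 A) (𝟙 A) ≫ S.dual (𝟙 A) (𝟙 A) = 𝟙 A := by
  simpa using S.ip3 (𝟙 A) (𝟙 A) (𝟙 A) (𝟙 A) (Category.id_comp _)

theorem dual_id_comp_ip_id (A : C) :
    S.dual (𝟙 A) (𝟙 A) ≫ S.ip (𝟙 A) (𝟙 A) = 𝟙 (D.dob A) := by
  simpa [D.dmap_id] using S.ip4 (𝟙 A) (𝟙 A) (𝟙 A) (𝟙 A) (Category.id_comp _)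

theorem ip_id_dob_eq_dmap_dual_id (A : C) :
    S.ip (𝟙 (D.dob A)) (𝟙 (D.dob A)) = D.dmap (S.dual (𝟙 A) (𝟙 A)) := by
  rw [IPStruct.dmap_dual, D.dmap_id]

theorem ip_id_comp_ip_id_dob (A : C) :
    S.ip (𝟙 A) (𝟙 A) ≫ S.ip (𝟙 (D.dob A)) (𝟙 (D.dob A)) = D.ι A := by
  rw [← S.ip2a (𝟙 A) (𝟙 A), D.dmap_id, Category.assoc, dual_id_comp_ip_id, Category.comp_id]

def toUnitaryStruct : UnitaryStruct D where
  φ A := S.ip (𝟙 A) (𝟙 A)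
  φinv A := S.dual (𝟙 A) (𝟙 A)
  φ_hom_inv := S.ip_id_comp_dual_id
  φ_inv_hom := S.dual_id_comp_ip_id
  u1 := S.ip_id_dob_eq_dmap_dual_id
  u2 := S.ip_id_comp_ip_id_dob

end InnerProduct

/-- Every inner product category is a unitary category, with unitary structure
`φ_A := ⟨1_A|1_A⟩ : A → A†`. In particular `φ_A` is an isomorphism with inverse
`⟨1_A|1_A⟩^ι`, and [U.1] `φ_{A†} = (φ_A⁻¹)†` and [U.2] `φ_A ≫ φ_{A†} = ι_A` hold. -/
theorem inner_product_is_unitary {C : Type u} [Category.{v} C]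
    (D : Involutive C) (S : InnerProduct D) :
    (∀ A : C, S.ip (𝟙 A) (𝟙 A) ≫ S.dual (𝟙 A) (𝟙 A) = 𝟙 A) ∧
    (∀ A : C, S.dual (𝟙 A) (𝟙 A) ≫ S.ip (𝟙 A) (𝟙 A) = 𝟙 (D.dob A)) ∧
    (∀ A : C, S.ip (𝟙 (D.dob A)) (𝟙 (D.dob A)) = D.dmap (S.dual (𝟙 A) (𝟙 A))) ∧
    (∀ A : C, S.ip (𝟙 A) (𝟙 A) ≫ S.ip (𝟙 (D.dob A)) (𝟙 (D.dob A)) = D.ι A) :=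
  let U := S.toUnitaryStruct
  ⟨U.φ_hom_inv, U.φ_inv_hom, U.u1, U.u2⟩
end

section
/- In an inner product category, every map f : A → B has a unique inner adjoint f* : B → A satisfying ⟨xf|y⟩ = ⟨x|yf*⟩ for all x, y; it is given explicitly by f* = φ_B ⋅ f† ⋅ φ_A^{-1}, where φ_X = ⟨1_X|1_X⟩. -/
open CategoryTheory

universe v u

/-! An equation `⟨xf|y⟩ = ⟨x|yg⟩` for all `x`, `y` is the equation `f φ_B = φ_A g†` whiskered by
`x` and `y†`, so the inner adjoints of `f` are the solutions `g` of that single equation. As `φ_A`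
is invertible and `(−)†` is faithful (`ι` being a natural isomorphism), it has at most one
solution, and the unitary axioms show that `φ_B f† φ_A⁻¹` is one. -/

namespace Involutive

variable {C : Type u} [Category.{v} C] (D : Involutive C)

theorem dmap_injective {X Y : C} : Function.Injective (D.dmap : (X ⟶ Y) → _) := by
  have recover : ∀ f : X ⟶ Y, f = D.ι X ≫ D.dmap (D.dmap f) ≫ D.ιinv Y := fun f => by
    rw [← Category.assoc, ← D.ι_natural, Category.assoc, D.ι_hom_inv, Category.comp_id]
  intro f g h
  rw [recover f, recover g, h]

end Involutive

namespace UnitaryStruct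

variable {C : Type u} [Category.{v} C] {D : Involutive C} (U : UnitaryStruct D)

@[simps]
def φIso (X : C) : X ≅ D.dob X := ⟨U.φ X, U.φinv X, U.φ_hom_inv X, U.φ_inv_hom X⟩

def IsInnerAdjoint {A B : C} (f : A ⟶ B) (g : B ⟶ A) : Prop :=
  ∀ (W Z : C) (x : W ⟶ A) (y : Z ⟶ B), U.uip (x ≫ f) y = U.uip x (y ≫ g)

theorem isInnerAdjoint_iff {A B : C} (f : A ⟶ B) (g : B ⟶ A) :
    U.IsInnerAdjoint f g ↔ f ≫ U.φ B = U.φ A ≫ D.dmap g := by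
  constructor
  · intro h
    simpa [uip, D.dmap_id] using h A B (𝟙 A) (𝟙 B)
  · intro h W Z x y
    simp only [uip, D.dmap_comp, Category.assoc, reassoc_of% h]

theorem comp_φ_eq_φ_comp_dmap_adj {A B : C} (f : A ⟶ B) :
    f ≫ U.φ B = U.φ A ≫ D.dmap (U.adj f) := by
  calc f ≫ U.φ B = f ≫ D.ι B ≫ D.dmap (U.φ B) := by rw [U.ι_comp_dmap_φ]
    _ = U.φ A ≫ U.φ (D.dob A) ≫ D.dmap (D.dmap f) ≫ D.dmap (U.φ B) := by
      rw [← Category.assoc, D.ι_natural, ← U.u2, Category.assoc, Category.assoc]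
    _ = U.φ A ≫ D.dmap (U.adj f) := by
      rw [adj, D.dmap_comp, D.dmap_comp, U.u1, Category.assoc]

theorem isInnerAdjoint_adj {A B : C} (f : A ⟶ B) : U.IsInnerAdjoint f (U.adj f) :=
  (U.isInnerAdjoint_iff f _).2 (U.comp_φ_eq_φ_comp_dmap_adj f)

theorem IsInnerAdjoint.eq_adj {A B : C} {f : A ⟶ B} {g : B ⟶ A} (hg : U.IsInnerAdjoint f g) :
    g = U.adj f := by
  apply D.dmap_injective
  rw [← (U.φIso A).cancel_iso_hom_left, φIso_hom, ← (U.isInnerAdjoint_iff f g).1 hg,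
    U.comp_φ_eq_φ_comp_dmap_adj]

end UnitaryStruct

/-- In an inner product category (viewed via its unitary structure, with
`⟨f|g⟩ := f ≫ φ ≫ g†`), every map `f : A → B` has a unique inner adjoint
`f* : B → A` satisfying `⟨xf|y⟩ = ⟨x|yf*⟩` for all `x`, `y`, given explicitly by
`f* = φ_B ≫ f† ≫ φ_A⁻¹`. -/
theorem inner_adjoint_exists_unique {C : Type u} [Category.{v} C]
    (D : Involutive C) (U : UnitaryStruct D) {A B : C} (f : A ⟶ B) :
    (∀ (W Z : C) (x : W ⟶ A) (y : Z ⟶ B),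
      U.uip (x ≫ f) y = U.uip x (y ≫ U.adj f)) ∧
    (∀ g : B ⟶ A,
      (∀ (W Z : C) (x : W ⟶ A) (y : Z ⟶ B), U.uip (x ≫ f) y = U.uip x (y ≫ g)) →
      g = U.adj f) :=
  ⟨U.isInnerAdjoint_adj f, fun _ hg => UnitaryStruct.IsInnerAdjoint.eq_adj U hg⟩
end

section
/- An involutive functor (F, γ) between inner product categories preserves the inner product (i.e. ⟨F(f)|F(g)⟩ = F(⟨f|g⟩) ⋅ γ_A for all parallel f, g : A → X) if and only if it is a unitary functor (i.e. F(φ_X) ⋅ γ_X = φ_{F(X)} for all X). -/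
open CategoryTheory

universe v u

universe v₁ v₂ u₁ u₂

section

variable {C : Type u₁} [Category.{v₁} C] {E : Type u₂} [Category.{v₂} E]
  {D₁ : Involutive C} {D₂ : Involutive E}

theorem UnitaryStruct.uip_id_id (U : UnitaryStruct D₁) (X : C) :
    U.uip (𝟙 X) (𝟙 X) = U.φ X := by
  simp only [UnitaryStruct.uip, D₁.dmap_id, Category.id_comp, Category.comp_id]

theorem UnitaryStruct.map_uip_comp (U : UnitaryStruct D₁) (F : C ⥤ E)
    (γ : ∀ X : C, F.obj (D₁.dob X) ⟶ D₂.dob (F.obj X))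
    (γnat : ∀ {X Y : C} (f : X ⟶ Y), F.map (D₁.dmap f) ≫ γ X = γ Y ≫ D₂.dmap (F.map f))
    {A B X : C} (f : A ⟶ X) (g : B ⟶ X) :
    F.map (U.uip f g) ≫ γ B = F.map f ≫ (F.map (U.φ X) ≫ γ X) ≫ D₂.dmap (F.map g) := by
  simp only [UnitaryStruct.uip, F.map_comp, Category.assoc, γnat]

end

theorem ip_preserving_iff_unitary_functor_general
    {C : Type u} [Category.{v} C] {E : Type u} [Category.{v} E]
    (D₁ : Involutive C) (U₁ : UnitaryStruct D₁)
    (D₂ : Involutive E) (U₂ : UnitaryStruct D₂)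
    (F : C ⥤ E)
    (γ : ∀ X : C, F.obj (D₁.dob X) ⟶ D₂.dob (F.obj X))
    (γnat : ∀ {X Y : C} (f : X ⟶ Y),
      F.map (D₁.dmap f) ≫ γ X = γ Y ≫ D₂.dmap (F.map f)) :
    (∀ (A X : C) (f g : A ⟶ X),
      U₂.uip (F.map f) (F.map g) = F.map (U₁.uip f g) ≫ γ A) ↔
    (∀ X : C, F.map (U₁.φ X) ≫ γ X = U₂.φ (F.obj X)) := by
  constructor
  · intro h X
    simpa only [F.map_id, UnitaryStruct.uip_id_id] using (h X X (𝟙 X) (𝟙 X)).symm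
  · intro h A X f g
    rw [UnitaryStruct.map_uip_comp U₁ F γ γnat, h]
    rfl

/-- An involutive functor `(F, γ)` between unitary (inner product) categories preserves
the inner product (`⟨F(f)|F(g)⟩ = F(⟨f|g⟩) ≫ γ_A` for all parallel `f, g : A → X`) if
and only if it is a unitary functor (`F(φ_X) ≫ γ_X = φ_{F(X)}` for all `X`). -/
theorem ip_preserving_iff_unitary_functor
    {C : Type u} [Category.{v} C] {E : Type u} [Category.{v} E]
    (D₁ : Involutive C) (U₁ : UnitaryStruct D₁)
    (D₂ : Involutive E) (U₂ : UnitaryStruct D₂)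
    (F : C ⥤ E)
    (γ : ∀ X : C, F.obj (D₁.dob X) ⟶ D₂.dob (F.obj X))
    (γiso : ∀ X : C, IsIso (γ X))
    (γnat : ∀ {X Y : C} (f : X ⟶ Y),
      F.map (D₁.dmap f) ≫ γ X = γ Y ≫ D₂.dmap (F.map f))
    (γcoh : ∀ X : C,
      F.map (D₁.ι X) ≫ γ (D₁.dob X) = D₂.ι (F.obj X) ≫ D₂.dmap (γ X)) :
    (∀ (A X : C) (f g : A ⟶ X),
      U₂.uip (F.map f) (F.map g) = F.map (U₁.uip f g) ≫ γ A) ↔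
    (∀ X : C, F.map (U₁.φ X) ≫ γ X = U₂.φ (F.obj X)) :=
  ip_preserving_iff_unitary_functor_general D₁ U₁ D₂ U₂ F γ γnat
end
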